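/- arXiv:1001.5166 — 2 statements merged into one kernel-verified Lean document; each statement's English description precedes it below -/
import Mathlib

section
/- For every k-dimensional hypermatrix A of order n over ℂ and all n × n complex matrices L₁,…,L_k, the combinatorial hyperdeterminant transforms under multilinear matrix multiplication by the product of the determinants: Det_k((L₁,…,L_k)·A) = det(L₁)·det(L₂)⋯det(L_k)·Det_k(A). -/
open scoped BigOperators

/-- The combinatorial hyperdeterminant of a `k`-dimensional hypermatrix of order `n` over `ℂ`:
`Det_k(A) = (1/n!) ∑_{σ₁,…,σ_k ∈ Σ_n} sign(σ₁)⋯sign(σ_k) ∏_{i=1}^n A_{σ₁(i),…,σ_k(i)}`. -/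
noncomputable def hyperdet (k n : ℕ) (A : (Fin k → Fin n) → ℂ) : ℂ :=
  (Nat.factorial n : ℂ)⁻¹ *
    ∑ σ : Fin k → Equiv.Perm (Fin n),
      (∏ d : Fin k, ((Equiv.Perm.sign (σ d) : ℤ) : ℂ)) * ∏ i : Fin n, A fun d => σ d i

/-- Multilinear matrix multiplication of a cubic hypermatrix `A` of order `n` by `n × n`
matrices `L₁, …, L_k`:
`((L₁,…,L_k)·A)_{p₁…p_k} = ∑_{j₁,…,j_k} (L₁)_{p₁j₁}⋯(L_k)_{p_kj_k}·A_{j₁…j_k}`. -/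
noncomputable def multilinearMul (k n : ℕ) (L : Fin k → Matrix (Fin n) (Fin n) ℂ)
    (A : (Fin k → Fin n) → ℂ) : (Fin k → Fin n) → ℂ :=
  fun p => ∑ j : Fin k → Fin n, (∏ d : Fin k, L d (p d) (j d)) * A j


theorem key (k n : ℕ) (L : Fin k → Matrix (Fin n) (Fin n) ℂ)
    (A : (Fin k → Fin n) → ℂ) :
    (∑ σ : Fin k → Equiv.Perm (Fin n),
      (∏ d : Fin k, ((Equiv.Perm.sign (σ d) : ℤ) : ℂ)) *
        ∏ i : Fin n, ∑ j : Fin k → Fin n, (∏ d : Fin k, L d (σ d i) (j d)) * A j)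
    = (∏ d : Fin k, (L d).det) *
      ∑ σ : Fin k → Equiv.Perm (Fin n),
        (∏ d : Fin k, ((Equiv.Perm.sign (σ d) : ℤ) : ℂ)) * ∏ i : Fin n, A fun d => σ d i := by
  -- expand the product of sums
  have step1 : ∀ σ : Fin k → Equiv.Perm (Fin n),
      (∏ i : Fin n, ∑ j : Fin k → Fin n, (∏ d : Fin k, L d (σ d i) (j d)) * A j)
      = ∑ J : Fin n → Fin k → Fin n,
          (∏ i : Fin n, ∏ d : Fin k, L d (σ d i) (J i d)) * ∏ i : Fin n, A (J i) := by
    intro σ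
    rw [Finset.prod_univ_sum]
    rw [Fintype.piFinset_univ]
    exact Finset.sum_congr rfl fun J _ => by rw [Finset.prod_mul_distrib]
  simp_rw [step1, Finset.mul_sum]
  rw [Finset.sum_comm]
  -- inner sum over σ factors through d
  have step2 : ∀ J : Fin n → Fin k → Fin n,
      (∑ σ : Fin k → Equiv.Perm (Fin n),
        (∏ d : Fin k, ((Equiv.Perm.sign (σ d) : ℤ) : ℂ)) *
          ((∏ i : Fin n, ∏ d : Fin k, L d (σ d i) (J i d)) * ∏ i : Fin n, A (J i)))
      = (∏ d : Fin k, ((L d).submatrix id fun i => J i d).det) * ∏ i : Fin n, A (J i) := by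
    intro J
    have : ∀ σ : Fin k → Equiv.Perm (Fin n),
        (∏ d : Fin k, ((Equiv.Perm.sign (σ d) : ℤ) : ℂ)) *
          ((∏ i : Fin n, ∏ d : Fin k, L d (σ d i) (J i d)) * ∏ i : Fin n, A (J i))
        = (∏ d : Fin k, (((Equiv.Perm.sign (σ d) : ℤ) : ℂ) *
            ∏ i : Fin n, L d (σ d i) (J i d))) * ∏ i : Fin n, A (J i) := by
      intro σ
      rw [Finset.prod_comm (s := Finset.univ) (t := Finset.univ)
        (f := fun i d => L d (σ d i) (J i d)), Finset.prod_mul_distrib]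
      ring
    simp_rw [this]
    rw [← Finset.sum_mul]
    congr 1
    have hd : (∏ d : Fin k, ((L d).submatrix id fun i => J i d).det)
        = ∑ σ : Fin k → Equiv.Perm (Fin n),
            ∏ d : Fin k, (((Equiv.Perm.sign (σ d) : ℤ) : ℂ) *
              ∏ i : Fin n, L d ((σ d) i) (J i d)) := by
      simp_rw [Matrix.det_apply']
      rw [Finset.prod_univ_sum, Fintype.piFinset_univ]
      rfl
    rw [hd]
  simp_rw [step2]
  -- restrict the sum to J whose slices are permutations
  set e : (Fin k → Equiv.Perm (Fin n)) → (Fin n → Fin k → Fin n) :=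
    fun π => fun i d => π d i with he
  have einj : Function.Injective e := by
    intro π π' h
    funext d
    ext i
    exact congrArg Fin.val (congrFun (congrFun h i) d)
  have hvan : ∀ J ∈ (Finset.univ : Finset (Fin n → Fin k → Fin n)),
      J ∉ Finset.univ.image e →
      (∏ d : Fin k, ((L d).submatrix id fun i => J i d).det) * ∏ i : Fin n, A (J i) = 0 := by
    intro J _ hJ
    by_contra hne
    apply hJ
    have hinj : ∀ d : Fin k, Function.Injective fun i => J i d := by
      intro d
      by_contra hd
      rw [Function.not_injective_iff] at hd
      obtain ⟨a, b, hab, hne'⟩ := hd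
      have : ((L d).submatrix id fun i => J i d).det = 0 :=
        Matrix.det_zero_of_column_eq hne' (fun p => by simp [Matrix.submatrix, hab])
      exact hne (by rw [Finset.prod_eq_zero (Finset.mem_univ d) this, zero_mul])
    refine Finset.mem_image.2 ⟨fun d => Equiv.ofBijective _
      ((Finite.injective_iff_bijective).1 (hinj d)), Finset.mem_univ _, ?_⟩
    funext i
    rfl
  rw [← Finset.sum_subset (Finset.subset_univ (Finset.univ.image e)) hvan,
    Finset.sum_image (fun a _ b _ h => einj h)]
  refine Finset.sum_congr rfl fun π _ => ?_
  have : ∀ d : Fin k, ((L d).submatrix id fun i => e π i d).det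
      = ((Equiv.Perm.sign (π d) : ℤ) : ℂ) * (L d).det := by
    intro d
    have := Matrix.det_permute' (π d) (L d)
    simpa using this
  simp_rw [this, Finset.prod_mul_distrib]
  ring

/-- The hyperdeterminant transforms under multilinear matrix multiplication by the
product of the determinants: `Det_k((L₁,…,L_k)·A) = det(L₁)⋯det(L_k)·Det_k(A)`. -/
theorem hyperdet_multilinearMul (k n : ℕ) (L : Fin k → Matrix (Fin n) (Fin n) ℂ)
    (A : (Fin k → Fin n) → ℂ) :
    hyperdet k n (multilinearMul k n L A) =
      (∏ d : Fin k, (L d).det) * hyperdet k n A := by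
  unfold hyperdet multilinearMul
  rw [key k n L A]
  ring
end

section
/- Let A ∈ ℝ^{n×n×n} be a 3-dimensional hypermatrix of order n with direction-1 slices A₁,…,A_n ∈ ℝ^{n×n} (so (A_t)_{jk} = A_{tjk}). Suppose there exists an invertible real n × n matrix Λ such that det(∑_{j=1}^{n} Λ_{ij} A_j) = 0 for every i = 1,…,n. Then the tensor rank of A satisfies rank(A) ≤ n(n−1). -/
open scoped BigOperators

/-- The tensor rank of a 3-dimensional hypermatrix of order `n` over `ℝ`: the least `r`
such that `A` is a sum of `r` decomposable hypermatrices `u ⊗ v ⊗ w`, with entries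
`u_i·v_j·w_k`. -/
noncomputable def tensorRank3 {n : ℕ} (A : Fin n → Fin n → Fin n → ℝ) : ℕ :=
  sInf {r : ℕ | ∃ u v w : Fin r → Fin n → ℝ,
    A = fun i j k => ∑ t : Fin r, u t i * v t j * w t k}

/-!
The matrices `B_i = ∑_t Λ_{it} A_t` are singular, so each has rank at most `n - 1` and is a sum
of `n - 1` rank-one matrices `v ⊗ w`. Inverting `Λ` gives `A_t = ∑_i (Λ⁻¹)_{ti} B_i`, so `A` is
the sum of the `n(n - 1)` decomposable hypermatrices `(Λ⁻¹)_{·i} ⊗ v ⊗ w`.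
-/

namespace Matrix

variable {K m n : Type*} [Field K] [Fintype n]

theorem rank_lt_card_of_det_eq_zero [DecidableEq n] {M : Matrix n n K} (hM : M.det = 0) :
    M.rank < Fintype.card n := by
  refine (M.rank_le_card_width).lt_of_ne fun hrank => ?_
  have hrange : LinearMap.range M.mulVecLin = ⊤ :=
    Submodule.eq_top_of_finrank_eq (hrank.trans (Module.finrank_fintype_fun_eq_card K).symm)
  have hunit : IsUnit M := mulVec_surjective_iff_isUnit.mp (LinearMap.range_eq_top.mp hrange)
  exact ((isUnit_iff_isUnit_det M).mp hunit).ne_zero hM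

theorem exists_eq_sum_mul_of_rank (M : Matrix m n K) :
    ∃ (v : Fin M.rank → m → K) (w : Fin M.rank → n → K),
      ∀ j k, M j k = ∑ s, v s j * w s k := by
  let b := Module.finBasis K (LinearMap.range M.mulVecLin)
  have hcol : ∀ k, M.col k ∈ LinearMap.range M.mulVecLin := fun k => by
    classical
    exact ⟨Pi.single k 1, by ext j; simp⟩
  refine ⟨fun s => b s, fun s k => b.repr ⟨M.col k, hcol k⟩ s, fun j k => ?_⟩
  have hsum := congrArg (fun x : LinearMap.range M.mulVecLin => (x : m → K) j)
    (b.sum_repr ⟨M.col k, hcol k⟩)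
  simp only [Submodule.coe_sum, Submodule.coe_smul, Finset.sum_apply, Pi.smul_apply,
    smul_eq_mul, col_apply] at hsum
  rw [← hsum]
  exact Finset.sum_congr rfl fun s _ => mul_comm _ _

theorem sum_inv_smul_sum_smul {R M : Type*} [CommRing R] [AddCommGroup M] [Module R M]
    [DecidableEq n] {Λ : Matrix n n R} (hΛ : IsUnit Λ) (x : n → M) (t : n) :
    ∑ i, Λ⁻¹ t i • ∑ s, Λ i s • x s = x t := by
  simp_rw [Finset.smul_sum, smul_smul]
  rw [Finset.sum_comm]
  simp_rw [← Finset.sum_smul, ← mul_apply, nonsing_inv_mul Λ ((isUnit_iff_isUnit_det Λ).mp hΛ),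
    one_apply, ite_smul, one_smul, zero_smul, Finset.sum_ite_eq, Finset.mem_univ, if_true]

end Matrix

theorem tensorRank3_le_card {n : ℕ} {ι : Type*} [Fintype ι] (A : Fin n → Fin n → Fin n → ℝ)
    (u v w : ι → Fin n → ℝ) (hA : ∀ i j k, A i j k = ∑ t, u t i * v t j * w t k) :
    tensorRank3 A ≤ Fintype.card ι := by
  let e := (Fintype.equivFin ι).symm
  refine Nat.sInf_le ⟨u ∘ e, v ∘ e, w ∘ e, funext fun i => funext fun j => funext fun k => ?_⟩
  simpa [Equiv.sum_comp e (fun t => u t i * v t j * w t k)] using hA i j k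

theorem tensorRank3_le_sum_rank {n : ℕ} {ι : Type*} [Fintype ι] (A : Fin n → Fin n → Fin n → ℝ)
    (B : ι → Matrix (Fin n) (Fin n) ℝ) (c : Fin n → ι → ℝ)
    (hA : ∀ t, Matrix.of (A t) = ∑ i, c t i • B i) :
    tensorRank3 A ≤ ∑ i, (B i).rank := by
  choose v w hB using fun i => (B i).exists_eq_sum_mul_of_rank
  have hcard : Fintype.card (Σ i, Fin (B i).rank) = ∑ i, (B i).rank := by simp
  refine hcard ▸ tensorRank3_le_card A (fun p t => c t p.1) (fun p => v p.1 p.2)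
    (fun p => w p.1 p.2) fun t j k => ?_
  have hAt := congrFun (congrFun (hA t) j) k
  simp only [Matrix.of_apply, Matrix.sum_apply, Matrix.smul_apply, smul_eq_mul, hB] at hAt
  simp_rw [hAt, Fintype.sum_sigma, Finset.mul_sum, mul_assoc]

/-- If there is an invertible real `n × n` matrix `Λ` such that each of the matrices
`∑_j Λ_{ij} A_j` (where `A_t` is the `t`-th direction-1 slice of `A`, `(A_t)_{jk} = A_{tjk}`)
is singular, then the tensor rank of `A` is at most `n(n-1)`. -/
theorem tensorRank3_le_of_singular_combinations (n : ℕ) (A : Fin n → Fin n → Fin n → ℝ)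
    (Λ : Matrix (Fin n) (Fin n) ℝ) (hΛ : IsUnit Λ)
    (h : ∀ i : Fin n,
      Matrix.det (∑ t : Fin n, Λ i t • Matrix.of (A t)) = 0) :
    tensorRank3 A ≤ n * (n - 1) := by
  let B : Fin n → Matrix (Fin n) (Fin n) ℝ := fun i => ∑ t, Λ i t • Matrix.of (A t)
  have hA : ∀ t, Matrix.of (A t) = ∑ i, Λ⁻¹ t i • B i := fun t =>
    (Matrix.sum_inv_smul_sum_smul hΛ (fun s => Matrix.of (A s)) t).symm
  have hrank : ∀ i, (B i).rank ≤ n - 1 := fun i => Nat.le_sub_one_of_lt <|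
    (Matrix.rank_lt_card_of_det_eq_zero (h i)).trans_eq (Fintype.card_fin n)
  calc tensorRank3 A ≤ ∑ i, (B i).rank := tensorRank3_le_sum_rank A B _ hA
    _ ≤ ∑ _i : Fin n, (n - 1) := Finset.sum_le_sum fun i _ => hrank i
    _ = n * (n - 1) := by simp
end
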